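/- arXiv:2012.15844 — 2 statements merged into one kernel-verified Lean document; each statement's English description precedes it below -/
import Mathlib

section
/- Let rk be a Sylvester matrix rank function on a ring R, let a ∈ R be nilpotent with a^{n+2} = 0. Then rk(a^n) ≥ 2·rk(a^{n+1}). -/
/-- A Sylvester matrix rank function on a ring `R`: it assigns a non-negative real number
to each matrix over `R` satisfying (SMat1)-(SMat4). -/
structure SylvesterMatrixRank (R : Type) [Ring R] where
  rk : ∀ {n m : ℕ}, Matrix (Fin n) (Fin m) R → ℝ
  rk_nonneg : ∀ {n m : ℕ} (A : Matrix (Fin n) (Fin m) R), 0 ≤ rk A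
  rk_zero : ∀ {n m : ℕ}, rk (0 : Matrix (Fin n) (Fin m) R) = 0
  rk_one : rk (1 : Matrix (Fin 1) (Fin 1) R) = 1
  rk_mul_left : ∀ {n m k : ℕ} (A : Matrix (Fin n) (Fin m) R) (B : Matrix (Fin m) (Fin k) R),
    rk (A * B) ≤ rk A
  rk_mul_right : ∀ {n m k : ℕ} (A : Matrix (Fin n) (Fin m) R) (B : Matrix (Fin m) (Fin k) R),
    rk (A * B) ≤ rk B
  rk_diag : ∀ {n m n' m' : ℕ} (A : Matrix (Fin n) (Fin m) R) (B : Matrix (Fin n') (Fin m') R),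
    rk ((Matrix.fromBlocks A 0 0 B).submatrix finSumFinEquiv.symm finSumFinEquiv.symm)
      = rk A + rk B
  rk_triangle : ∀ {n m n' m' : ℕ} (A : Matrix (Fin n) (Fin m) R) (B : Matrix (Fin n') (Fin m') R)
      (C : Matrix (Fin n) (Fin m') R),
    rk A + rk B ≤
      rk ((Matrix.fromBlocks A C 0 B).submatrix finSumFinEquiv.symm finSumFinEquiv.symm)

/-!
With `c = a ^ n`, the column `(1, a)`, the `1 × 1` matrix `c` and the row `(a, 1)` multiply to
`[[c a, c], [a c a, a c]]`, whose lower-left entry `a ^ (n + 2)` vanishes. So this upper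
triangular matrix factors through `!![a ^ n]`, while (SMat4) bounds its rank from below by
`rk (c a) + rk (a c) = 2 rk (a ^ (n + 1))`.
-/

theorem Matrix.fromBlocks_submatrix_finSumFinEquiv_of_fin_one {R : Type} [Zero R]
    (x y z : R) :
    (Matrix.fromBlocks !![x] !![y] 0 !![z]).submatrix finSumFinEquiv.symm finSumFinEquiv.symm
      = !![x, y; 0, z] := by
  ext i j
  fin_cases i <;> fin_cases j <;> rfl

namespace SylvesterMatrixRank

variable {R : Type} [Ring R] (rk : SylvesterMatrixRank R)

theorem rk_mul_mul_le {n m k l : ℕ} (P : Matrix (Fin n) (Fin m) R) (M : Matrix (Fin m) (Fin k) R)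
    (Q : Matrix (Fin k) (Fin l) R) : rk.rk (P * M * Q) ≤ rk.rk M :=
  (rk.rk_mul_left _ Q).trans (rk.rk_mul_right P M)

theorem rk_upperTriangular_ge (x y z : R) : rk.rk !![x] + rk.rk !![z] ≤ rk.rk !![x, y; 0, z] := by
  simpa only [Matrix.fromBlocks_submatrix_finSumFinEquiv_of_fin_one] using
    rk.rk_triangle !![x] !![z] !![y]

theorem rk_mul_add_rk_mul_le {a c : R} (h : a * c * a = 0) :
    rk.rk !![c * a] + rk.rk !![a * c] ≤ rk.rk !![c] := by
  have factor : !![c * a, c; 0, a * c] = !![1; a] * !![c] * !![a, 1] := by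
    ext i j
    fin_cases i <;> fin_cases j <;> simp [h]
  calc rk.rk !![c * a] + rk.rk !![a * c] ≤ rk.rk !![c * a, c; 0, a * c] :=
        rk.rk_upperTriangular_ge _ _ _
    _ ≤ rk.rk !![c] := factor ▸ rk.rk_mul_mul_le _ _ _

end SylvesterMatrixRank

theorem rk_nilpotent_pow_general {R : Type} [Ring R] (rk : SylvesterMatrixRank R)
    (a : R) (n : ℕ) (h : a ^ (n + 2) = 0) :
    2 * rk.rk !![a ^ (n + 1)] ≤ rk.rk !![a ^ n] := by
  have key := rk.rk_mul_add_rk_mul_le (a := a) (c := a ^ n) (by rw [← pow_succ', ← pow_succ, h])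
  rw [← pow_succ, ← pow_succ'] at key
  linarith

/-- If `a` is nilpotent with `a^(n+2) = 0`, then `rk (a^n) ≥ 2 * rk (a^(n+1))` for any
Sylvester matrix rank function `rk`. -/
theorem rk_nilpotent_pow {R : Type} [Ring R] (rk : SylvesterMatrixRank R)
    (a : R) (hnil : IsNilpotent a) (n : ℕ) (h : a ^ (n + 2) = 0) :
    2 * rk.rk !![a ^ (n + 1)] ≤ rk.rk !![a ^ n] :=
  rk_nilpotent_pow_general rk a n h
end

section
/- Let D be a division ring, τ an automorphism of D of finite inner order with τ^m(d) = a^{−1}da for some a ∈ D, and let k be the smallest positive integer such that there is a non-zero b ∈ Z(D) with τ(ba^k) = ba^k. Then the center of R = D[t^{±1}; τ] is the ordinary Laurent polynomial ring K^τ[(ba^k t^{km})^{±1}], where K^τ is the subfield of Z(D) fixed by τ. -/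
/-!
A central element `x = Σ φ(cᵢ) tⁱ` commutes with every `φ d` and with `t`; comparing coefficients
gives `cᵢ τⁱ(d) = d cᵢ` and `τ(cᵢ) = cᵢ`. For `cᵢ ≠ 0` the first identity makes `τⁱ` inner, and
since inner automorphisms form a subgroup, minimality of `m` forces `i = m q`; then `cᵢ a⁻ᑫ` is
central. The second identity now puts `aᑫ` into the subgroup of units fixed by `τ` up to a central
factor, which contains `aᵏ`, so minimality of `k` forces `q = k n`, and `cᵢ tⁱ = z sⁿ` with
`z ∈ K^τ`. Conversely `s` commutes with `D` (because `τ^{km}` is conjugation by `aᵏ`) and with `t`,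
so every `K^τ`-combination of powers of `s` is central.
-/

theorem Subgroup.natCast_dvd_of_zpow_mem {G : Type*} [Group G] (H : Subgroup G) {g : G} {m : ℕ}
    (hm : 0 < m) (hgm : g ^ m ∈ H) (hmin : ∀ j : ℕ, 0 < j → j < m → g ^ j ∉ H) {i : ℤ}
    (hi : g ^ i ∈ H) : (m : ℤ) ∣ i := by
  have hrem : g ^ (i % m) ∈ H := by
    rw [Int.emod_def, zpow_sub, zpow_mul, zpow_natCast]
    exact H.mul_mem hi (H.inv_mem (H.zpow_mem hgm _))
  have h0 : 0 ≤ i % m := Int.emod_nonneg i (by omega)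
  have hlt : i % m < m := Int.emod_lt_of_pos i (by omega)
  rw [Int.dvd_iff_emod_eq_zero]
  by_contra hne
  refine hmin (i % m).toNat (by omega) (by omega) ?_
  rwa [← zpow_natCast, Int.toNat_of_nonneg h0]

namespace SkewLaurent

def innerAut (D : Type*) [Semiring D] : Dˣ →* RingAut D :=
  (MulSemiringAction.toRingAut (ConjAct Dˣ) D).comp ConjAct.toConjAct.toMonoidHom

theorem innerAut_apply {D : Type*} [Semiring D] (u : Dˣ) (d : D) :
    innerAut D u d = u * d * ↑u⁻¹ :=
  ConjAct.units_smul_def _ d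

section DivisionRing

variable {D : Type*} [DivisionRing D] {τ : RingAut D}

theorem mem_range_innerAut_iff {σ : RingAut D} :
    σ ∈ (innerAut D).range ↔ ∃ u : D, u ≠ 0 ∧ ∀ d : D, σ d = u⁻¹ * d * u := by
  constructor
  · rintro ⟨v, rfl⟩
    exact ⟨↑v⁻¹, Units.ne_zero _, fun d => by simp [innerAut_apply]⟩
  · rintro ⟨u, hu, h⟩
    exact ⟨(Units.mk0 u hu)⁻¹, RingEquiv.ext fun d => by rw [innerAut_apply]; simp [h]⟩

theorem zpow_natCast_mul_apply {m : ℕ} {a : D} (ha : a ≠ 0)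
    (hinner : ∀ d : D, (τ ^ m) d = a⁻¹ * d * a) (q : ℤ) (d : D) :
    (τ ^ ((m : ℤ) * q)) d = (a ^ q)⁻¹ * d * a ^ q := by
  have hm : τ ^ m = innerAut D (Units.mk0 a ha)⁻¹ :=
    RingEquiv.ext fun d => by rw [innerAut_apply]; simp [hinner]
  rw [zpow_mul, zpow_natCast, hm, ← map_zpow, innerAut_apply]
  simp [Units.val_zpow_eq_zpow_val]

theorem exists_center_mul_zpow_of_mul_zpow_apply {m : ℕ} (hm : 0 < m) {a : D} (ha : a ≠ 0)
    (hinner : ∀ d : D, (τ ^ m) d = a⁻¹ * d * a)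
    (hmmin : ∀ j : ℕ, 0 < j → j < m →
      ¬ ∃ u : D, u ≠ 0 ∧ ∀ d : D, (τ ^ j) d = u⁻¹ * d * u)
    {i : ℤ} {c : D} (hc : c ≠ 0) (hrel : ∀ d : D, c * (τ ^ i) d = d * c) :
    ∃ q : ℤ, i = m * q ∧ ∃ w ∈ Set.center D, c = w * a ^ q := by
  have hi : τ ^ i ∈ (innerAut D).range :=
    mem_range_innerAut_iff.2 ⟨c, hc, fun d => by rw [mul_assoc, ← hrel, inv_mul_cancel_left₀ hc]⟩
  obtain ⟨q, rfl⟩ := Subgroup.natCast_dvd_of_zpow_mem _ hm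
    (mem_range_innerAut_iff.2 ⟨a, ha, hinner⟩)
    (fun j hj hjm => mem_range_innerAut_iff.not.2 (hmmin j hj hjm)) hi
  have haq : a ^ q ≠ 0 := zpow_ne_zero q ha
  refine ⟨q, rfl, c * (a ^ q)⁻¹, Semigroup.mem_center_iff.2 fun d => ?_,
    (inv_mul_cancel_right₀ haq c).symm⟩
  have hrel' := hrel d
  rw [zpow_natCast_mul_apply ha hinner] at hrel'
  calc d * (c * (a ^ q)⁻¹) = c * ((a ^ q)⁻¹ * d * a ^ q) * (a ^ q)⁻¹ := by
        rw [hrel', mul_assoc]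
    _ = c * (a ^ q)⁻¹ * d := by simp only [mul_assoc, mul_inv_cancel_right₀ haq]

variable (τ) in
/-- `k` is the order of `a` modulo this subgroup. -/
def fixedUpToCenter : Subgroup Dˣ where
  carrier := {x | ∃ b : D, b ∈ Set.center D ∧ b ≠ 0 ∧ τ (b * x) = b * x}
  one_mem' := ⟨1, Set.one_mem_center, one_ne_zero, by simp⟩
  mul_mem' := by
    rintro x y ⟨b₁, hb₁, hb₁0, h₁⟩ ⟨b₂, hb₂, hb₂0, h₂⟩
    refine ⟨b₁ * b₂, Set.mul_mem_center hb₁ hb₂, mul_ne_zero hb₁0 hb₂0, ?_⟩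
    have e : b₁ * b₂ * ↑(x * y) = b₁ * x * (b₂ * y) := by
      rw [Units.val_mul, mul_assoc b₁, ← mul_assoc b₂, ← Semigroup.mem_center_iff.1 hb₂ x]
      simp only [mul_assoc]
    rw [e, map_mul, h₁, h₂]
  inv_mem' := by
    rintro x ⟨b, hb, hb0, h⟩
    refine ⟨b⁻¹, Set.inv_mem_center hb, inv_ne_zero hb0, ?_⟩
    have e : b⁻¹ * ↑x⁻¹ = (b * x)⁻¹ := by
      rw [mul_inv_rev, Units.val_inv_eq_inv_val, Semigroup.mem_center_iff.1 (Set.inv_mem_center hb)]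
    rw [e, map_inv₀, h]

theorem exists_fixed_center_mul_zpow_of_map_eq {a b : D} (ha : a ≠ 0) {k : ℕ} (hk : 0 < k)
    (hb : b ∈ Set.center D) (hbne : b ≠ 0) (hfix : τ (b * a ^ k) = b * a ^ k)
    (hkmin : ∀ j : ℕ, 0 < j → j < k →
      ¬ ∃ b' : D, b' ∈ Set.center D ∧ b' ≠ 0 ∧ τ (b' * a ^ j) = b' * a ^ j)
    {w : D} (hw : w ∈ Set.center D) (hw0 : w ≠ 0) {q : ℤ} (hτ : τ (w * a ^ q) = w * a ^ q) :
    ∃ n : ℤ, q = k * n ∧ ∃ z ∈ Set.center D, τ z = z ∧ w * a ^ q = z * (b * a ^ k) ^ n := by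
  set u := Units.mk0 a ha
  obtain ⟨n, rfl⟩ := Subgroup.natCast_dvd_of_zpow_mem (fixedUpToCenter τ) (g := u) hk
    ⟨b, hb, hbne, by rwa [Units.val_pow_eq_pow_val]⟩
    (fun j hj hjk ⟨b', hb', hb'0, h'⟩ => hkmin j hj hjk
      ⟨b', hb', hb'0, by rwa [Units.val_pow_eq_pow_val] at h'⟩)
    ⟨w, hw, hw0, by rwa [Units.val_zpow_eq_zpow_val]⟩
  have hbn : b ^ n ∈ Set.center D := Semigroup.mem_center_iff.2 fun g =>
    (Commute.zpow_right₀ (Semigroup.mem_center_iff.1 hb g) n).eq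
  have hdecomp : w * a ^ ((k : ℤ) * n) = w * (b ^ n)⁻¹ * (b * a ^ k) ^ n := by
    have hba : Commute b (a ^ k) := (Semigroup.mem_center_iff.1 hb _).symm
    rw [hba.mul_zpow, ← zpow_natCast, ← zpow_mul, mul_assoc,
      inv_mul_cancel_left₀ (zpow_ne_zero n hbne)]
  refine ⟨n, rfl, w * (b ^ n)⁻¹, Set.mul_mem_center hw (Set.inv_mem_center hbn), ?_, hdecomp⟩
  rw [hdecomp, map_mul, map_zpow₀, hfix] at hτ
  exact mul_right_cancel₀ (zpow_ne_zero n (mul_ne_zero hbne (pow_ne_zero k ha))) hτ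

theorem exists_fixed_center_mul_zpow_of_mul_zpow_apply {m : ℕ} (hm : 0 < m) {a : D} (ha : a ≠ 0)
    (hinner : ∀ d : D, (τ ^ m) d = a⁻¹ * d * a)
    (hmmin : ∀ j : ℕ, 0 < j → j < m →
      ¬ ∃ u : D, u ≠ 0 ∧ ∀ d : D, (τ ^ j) d = u⁻¹ * d * u)
    {k : ℕ} (hk : 0 < k) {b : D} (hb : b ∈ Set.center D) (hbne : b ≠ 0)
    (hfix : τ (b * a ^ k) = b * a ^ k)
    (hkmin : ∀ j : ℕ, 0 < j → j < k →
      ¬ ∃ b' : D, b' ∈ Set.center D ∧ b' ≠ 0 ∧ τ (b' * a ^ j) = b' * a ^ j)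
    {i : ℤ} {c : D} (hc : c ≠ 0) (hτc : τ c = c) (hrel : ∀ d : D, c * (τ ^ i) d = d * c) :
    ∃ n : ℤ, i = n * ((k * m : ℕ) : ℤ) ∧
      ∃ z ∈ Set.center D, τ z = z ∧ c = z * (b * a ^ k) ^ n := by
  obtain ⟨q, rfl, w, hw, rfl⟩ := exists_center_mul_zpow_of_mul_zpow_apply hm ha hinner hmmin hc hrel
  obtain ⟨n, rfl, hzn⟩ := exists_fixed_center_mul_zpow_of_map_eq ha hk hb hbne hfix hkmin hw
    (left_ne_zero_of_mul hc) hτc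
  exact ⟨n, by push_cast; ring, hzn⟩

theorem mul_eq_mul_pow_apply_of_inner {m : ℕ} {a : D} (ha : a ≠ 0)
    (hinner : ∀ d : D, (τ ^ m) d = a⁻¹ * d * a) {b : D} (hb : b ∈ Set.center D) (k : ℕ) (d : D) :
    d * (b * a ^ k) = b * a ^ k * (τ ^ (k * m)) d := by
  have h := zpow_natCast_mul_apply ha hinner k d
  rw [← Nat.cast_mul, zpow_natCast, zpow_natCast, mul_comm] at h
  rw [h, mul_assoc b, mul_assoc _ d, mul_inv_cancel_left₀ (pow_ne_zero k ha), ← mul_assoc,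
    ← mul_assoc, Semigroup.mem_center_iff.1 hb]

end DivisionRing

section SkewSum

variable {D R : Type*} [Semiring D] [Semiring R] {τ : RingAut D} {φ : D →+* R} {t : Rˣ}

def skewSum (φ : D →+* R) (t : Rˣ) (c : ℤ →₀ D) : R :=
  c.sum fun i ci => φ ci * ((t ^ i : Rˣ) : R)

theorem units_zpow_mul_map (hcomm : ∀ d : D, (t : R) * φ d = φ (τ d) * t) (i : ℤ) (d : D) :
    ((t ^ i : Rˣ) : R) * φ d = φ ((τ ^ i) d) * ((t ^ i : Rˣ) : R) := by
  induction i using Int.induction_on generalizing d with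
  | zero => simp
  | succ n ih =>
    rw [zpow_add_one, zpow_add_one, Units.val_mul, mul_assoc, hcomm, ← mul_assoc, ih,
      RingAut.mul_apply, mul_assoc]
  | pred n ih =>
    have hinv : ((t⁻¹ : Rˣ) : R) * φ d = φ (τ⁻¹ d) * ((t⁻¹ : Rˣ) : R) := by
      rw [Units.inv_mul_eq_iff_eq_mul, ← mul_assoc, hcomm, Units.mul_inv_cancel_right,
        RingAut.inv_apply, RingEquiv.apply_symm_apply]
    rw [zpow_sub_one, zpow_sub_one, Units.val_mul, mul_assoc, hinv, ← mul_assoc, ih,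
      RingAut.mul_apply, mul_assoc]

theorem mem_center_of_commute (hspan : ∀ x : R, ∃ c : ℤ →₀ D, x = skewSum φ t c) {y : R}
    (hφ : ∀ d : D, Commute (φ d) y) (ht : Commute (t : R) y) : y ∈ Set.center R := by
  refine Semigroup.mem_center_iff.2 fun g => ?_
  obtain ⟨c, rfl⟩ := hspan g
  exact (Commute.sum_left _ _ _ fun i _ => (hφ _).mul_left (ht.units_zpow_left i)).eq

theorem commute_units_map_of_map_eq (hcomm : ∀ d : D, (t : R) * φ d = φ (τ d) * t) {z : D}
    (hz : τ z = z) : Commute (t : R) (φ z) := by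
  rw [Commute, SemiconjBy, hcomm, hz]

theorem map_mem_center (hcomm : ∀ d : D, (t : R) * φ d = φ (τ d) * t)
    (hspan : ∀ x : R, ∃ c : ℤ →₀ D, x = skewSum φ t c) {z : D} (hz : z ∈ Set.center D)
    (hτz : τ z = z) : φ z ∈ Set.center R :=
  mem_center_of_commute hspan (fun d => Commute.map (Semigroup.mem_center_iff.1 hz d) φ)
    (commute_units_map_of_map_eq hcomm hτz)

theorem map_mul_pow_mem_center (hcomm : ∀ d : D, (t : R) * φ d = φ (τ d) * t)
    (hspan : ∀ x : R, ∃ c : ℤ →₀ D, x = skewSum φ t c) {v : D} (hv : τ v = v) {N : ℕ}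
    (hvN : ∀ d : D, d * v = v * (τ ^ N) d) : φ v * ((t ^ N : Rˣ) : R) ∈ Set.center R := by
  refine mem_center_of_commute hspan (fun d => ?_) ?_
  · have htN := units_zpow_mul_map hcomm N d
    rw [zpow_natCast, zpow_natCast] at htN
    rw [Commute, SemiconjBy, ← mul_assoc, ← map_mul, hvN, map_mul, mul_assoc, ← htN, mul_assoc]
  · exact (commute_units_map_of_map_eq hcomm hv).mul_right
      ((Commute.refl (t : R)).units_zpow_right N)

theorem coeff_eq_of_sum_eq (hinj : Function.Injective (skewSum φ t)) (c : ℤ →₀ D)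
    {f g : ℤ → D → D} (hf : ∀ i, f i 0 = 0) (hg : ∀ i, g i 0 = 0)
    (h : (c.sum fun i ci => φ (f i ci) * ((t ^ i : Rˣ) : R)) =
      c.sum fun i ci => φ (g i ci) * ((t ^ i : Rˣ) : R)) (i : ℤ) :
    f i (c i) = g i (c i) := by
  have hcoeff : ∀ F : ℤ → D → D, (∀ i, F i 0 = 0) → ∃ e : ℤ →₀ D, (∀ i, e i = F i (c i)) ∧
      skewSum φ t e = c.sum fun i ci => φ (F i ci) * ((t ^ i : Rˣ) : R) := fun F hF =>
    ⟨Finsupp.onFinset c.support (fun i => F i (c i)) fun i hi => by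
        contrapose! hi; rw [Finsupp.notMem_support_iff.1 hi, hF],
      fun _ => rfl, Finsupp.onFinset_sum _ fun i => by rw [map_zero, zero_mul]⟩
  obtain ⟨ef, hef, hsf⟩ := hcoeff f hf
  obtain ⟨eg, heg, hsg⟩ := hcoeff g hg
  rw [← hef, ← heg, hinj (hsf.trans (h.trans hsg.symm))]

theorem coeff_mul_zpow_apply_eq (hcomm : ∀ d : D, (t : R) * φ d = φ (τ d) * t)
    (hinj : Function.Injective (skewSum φ t)) {c : ℤ →₀ D} {d : D}
    (h : Commute (φ d) (skewSum φ t c)) (i : ℤ) : c i * (τ ^ i) d = d * c i := by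
  refine coeff_eq_of_sum_eq hinj c (f := fun i ci => ci * (τ ^ i) d) (g := fun _ ci => d * ci)
    (fun _ => zero_mul _) (fun _ => mul_zero _) ?_ i
  calc (c.sum fun i ci => φ (ci * (τ ^ i) d) * ((t ^ i : Rˣ) : R))
      = skewSum φ t c * φ d := by
        rw [skewSum, Finsupp.sum_mul]
        refine Finsupp.sum_congr fun i _ => ?_
        rw [mul_assoc, units_zpow_mul_map hcomm, ← mul_assoc, map_mul]
    _ = φ d * skewSum φ t c := h.eq.symm
    _ = c.sum fun i ci => φ (d * ci) * ((t ^ i : Rˣ) : R) := by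
        rw [skewSum, Finsupp.mul_sum]
        exact Finsupp.sum_congr fun i _ => by rw [← mul_assoc, map_mul]

theorem map_coeff_eq (hcomm : ∀ d : D, (t : R) * φ d = φ (τ d) * t)
    (hinj : Function.Injective (skewSum φ t)) {c : ℤ →₀ D}
    (h : Commute (t : R) (skewSum φ t c)) (i : ℤ) : τ (c i) = c i := by
  refine coeff_eq_of_sum_eq hinj c (f := fun _ ci => τ ci) (g := fun _ ci => ci)
    (fun _ => map_zero τ) (fun _ => rfl) ((Units.mul_left_inj t).1 ?_) i
  calc (c.sum fun i ci => φ (τ ci) * ((t ^ i : Rˣ) : R)) * t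
      = t * skewSum φ t c := by
        rw [skewSum, Finsupp.mul_sum, Finsupp.sum_mul]
        refine Finsupp.sum_congr fun i _ => ?_
        rw [← mul_assoc, hcomm, mul_assoc, mul_assoc,
          ((Commute.refl (t : R)).units_zpow_right i).eq]
    _ = skewSum φ t c * t := h.eq

end SkewSum

theorem units_zpow_eq_map_zpow_mul {D R : Type*} [DivisionRing D] [Semiring R] {τ : RingAut D}
    {φ : D →+* R} {t : Rˣ} (hcomm : ∀ d : D, (t : R) * φ d = φ (τ d) * t) {v : D} (hv0 : v ≠ 0)
    (hv : τ v = v) {N : ℕ} {s : Rˣ} (hs : (s : R) = φ v * ((t ^ N : Rˣ) : R)) (n : ℤ) :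
    ((s ^ n : Rˣ) : R) = φ (v ^ n) * ((t ^ (n * N) : Rˣ) : R) := by
  set w := Units.map φ.toMonoidHom (Units.mk0 v hv0)
  have hwt : Commute w t := Units.ext (commute_units_map_of_map_eq hcomm hv).symm.eq
  rw [show s = w * t ^ N from Units.ext hs, (hwt.pow_right N).mul_zpow, ← zpow_natCast t N,
    ← zpow_mul, mul_comm (N : ℤ), Units.val_mul, ← map_zpow, Units.coe_map,
    Units.val_zpow_eq_zpow_val, Units.val_mk0]
  rfl

def fixedCenter {D : Type*} [Ring D] (τ : RingAut D) : Subring D :=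
  Subring.center D ⊓ RingHom.eqLocus τ (RingHom.id D)

section LaurentSpan

variable {D R : Type*} [Semiring D] [Semiring R]

/-- The image of the Laurent polynomials `K[T, T⁻¹]` under `T ↦ s`. -/
def laurentSpan (K : AddSubmonoid D) (φ : D →+* R) (s : Rˣ) : AddSubmonoid R where
  carrier := {x | ∃ z : ℤ →₀ D, (∀ r, z r ∈ K) ∧ x = z.sum fun r c => φ c * ((s ^ r : Rˣ) : R)}
  zero_mem' := ⟨0, fun _ => K.zero_mem, Finsupp.sum_zero_index.symm⟩
  add_mem' := by
    rintro _ _ ⟨z₁, hz₁, rfl⟩ ⟨z₂, hz₂, rfl⟩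
    exact ⟨z₁ + z₂, fun r => K.add_mem (hz₁ r) (hz₂ r),
      (Finsupp.sum_add_index' (fun _ => by rw [map_zero, zero_mul])
        fun _ _ _ => by rw [map_add, add_mul]).symm⟩

variable {K : AddSubmonoid D} {φ : D →+* R} {s : Rˣ}

theorem map_mul_zpow_mem_laurentSpan {z : D} (hz : z ∈ K) (r : ℤ) :
    φ z * ((s ^ r : Rˣ) : R) ∈ laurentSpan K φ s := by
  refine ⟨Finsupp.single r z, fun r' => ?_,
    (Finsupp.sum_single_index (h := fun r c => φ c * ((s ^ r : Rˣ) : R))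
      (by rw [map_zero, zero_mul])).symm⟩
  rw [Finsupp.single_apply]
  split_ifs
  exacts [hz, K.zero_mem]

theorem laurentSpan_subset_center (hK : ∀ z ∈ K, φ z ∈ Set.center R)
    (hs : (s : R) ∈ Set.center R) : (laurentSpan K φ s : Set R) ⊆ Set.center R := by
  rintro _ ⟨z, hz, rfl⟩
  refine Subsemiring.sum_mem (Subsemiring.center R) fun r _ => Set.mul_mem_center (hK _ (hz r)) ?_
  exact Semigroup.mem_center_iff.2 fun g =>
    (Commute.units_zpow_right (Semigroup.mem_center_iff.1 hs g) r).eq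

end LaurentSpan

end SkewLaurent

open SkewLaurent

/-- Let `D` be a division ring and `τ` an automorphism of `D` of finite inner order `m`,
with `τ^m` given by conjugation by `a ∈ D`, and let `k` be the smallest positive integer
such that `τ (b * a^k) = b * a^k` for some non-zero central `b`. The skew Laurent
polynomial ring `R = D[t^{±1}; τ]` is axiomatized by a ring embedding `φ : D → R` and a
unit `t` with `t · φ d = φ (τ d) · t` and unique representation of elements as finite
sums `Σ φ (a i) * t ^ i`, `i : ℤ`. Then the center of `R` is the ordinary Laurent
polynomial ring `K^τ[(b a^k t^{km})^{±1}]`, i.e. it consists exactly of the finite sums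
`Σ_r φ (z r) * s ^ r` (`r : ℤ`) where `s` is the unit `φ (b * a^k) * t^(k*m)` and each
`z r` is a `τ`-fixed central element of `D`. -/
theorem center_skewLaurent_of_finite_inner_order
    (D R : Type) [DivisionRing D] [Ring R] (τ : RingAut D) (φ : D →+* R) (t : Rˣ)
    (hcomm : ∀ d : D, (t : R) * φ d = φ (τ d) * (t : R))
    (hbasis : ∀ x : R, ∃! a : ℤ →₀ D,
      x = a.sum fun i c => φ c * ((t ^ i : Rˣ) : R))
    (m : ℕ) (hm : 0 < m) (a : D) (ha : a ≠ 0)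
    (hinner : ∀ d : D, (τ ^ m) d = a⁻¹ * d * a)
    (hmmin : ∀ j : ℕ, 0 < j → j < m →
      ¬ ∃ u : D, u ≠ 0 ∧ ∀ d : D, (τ ^ j) d = u⁻¹ * d * u)
    (k : ℕ) (hk : 0 < k) (b : D) (hb : b ∈ Set.center D) (hbne : b ≠ 0)
    (hfix : τ (b * a ^ k) = b * a ^ k)
    (hkmin : ∀ j : ℕ, 0 < j → j < k →
      ¬ ∃ b' : D, b' ∈ Set.center D ∧ b' ≠ 0 ∧ τ (b' * a ^ j) = b' * a ^ j)
    (s : Rˣ) (hs : (s : R) = φ (b * a ^ k) * ((t ^ (k * m) : Rˣ) : R)) :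
    Set.center R = {x : R | ∃ z : ℤ →₀ D,
      (∀ r : ℤ, z r ∈ Set.center D ∧ τ (z r) = z r) ∧
      x = z.sum fun r c => φ c * ((s ^ r : Rˣ) : R)} := by
  have hspan (x : R) : ∃ c, x = skewSum φ t c := (hbasis x).exists
  have hinj : Function.Injective (skewSum φ t) := fun _ _ h => (hbasis _).unique rfl h
  have hsc : (s : R) ∈ Set.center R := hs ▸ map_mul_pow_mem_center hcomm hspan hfix
    (mul_eq_mul_pow_apply_of_inner ha hinner hb k)
  show Set.center R = laurentSpan (fixedCenter τ).toAddSubmonoid φ s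
  refine Set.Subset.antisymm (fun x hx => ?_)
    (laurentSpan_subset_center (fun z hz => map_mem_center hcomm hspan hz.1 hz.2) hsc)
  obtain ⟨c, rfl, -⟩ := hbasis x
  refine AddSubmonoid.sum_mem _ fun i hi => ?_
  obtain ⟨n, rfl, z, hz, hτz, hcz⟩ := exists_fixed_center_mul_zpow_of_mul_zpow_apply hm ha hinner
    hmmin hk hb hbne hfix hkmin (Finsupp.mem_support_iff.1 hi)
    (map_coeff_eq hcomm hinj (Semigroup.mem_center_iff.1 hx _) i)
    fun d => coeff_mul_zpow_apply_eq hcomm hinj (Semigroup.mem_center_iff.1 hx _) i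
  beta_reduce
  rw [hcz, map_mul, mul_assoc, ← units_zpow_eq_map_zpow_mul hcomm
    (mul_ne_zero hbne (pow_ne_zero k ha)) hfix hs]
  exact map_mul_zpow_mem_laurentSpan (K := (fixedCenter τ).toAddSubmonoid) ⟨hz, hτz⟩ n
end
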